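/- arXiv:1011.5043 — 2 statements merged into one kernel-verified Lean document; each statement's English description precedes it below -/
import Mathlib

section
/- Let Z be a random vector in ℝ^d and r > 0. Then E[(r^d / ‖Z‖^d) · 𝟙_{‖Z‖ ≥ r}] ≤ d ∫_r^∞ (r^d / ρ^{d+1}) P(‖Z‖ ≤ ρ) dρ. -/
open MeasureTheory Real Set
open scoped ENNReal

/-!
For `x ≥ r > 0` write `r^d / x^d = ∫_x^∞ d r^d ρ^{-(d+1)} dρ`. Substituting `x = ‖Z‖` and
exchanging the two integrals (Tonelli) turns the left-hand side into
`d ∫_r^∞ r^d ρ^{-(d+1)} P(r ≤ ‖Z‖ < ρ) dρ`, and `P(r ≤ ‖Z‖ < ρ) ≤ P(‖Z‖ ≤ ρ)`.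
-/

lemma rpow_neg_natCast_succ_eq_inv_pow {ρ : ℝ} (hρ : 0 ≤ ρ) (d : ℕ) :
    ρ ^ (-(d + 1 : ℝ)) = (ρ ^ (d + 1))⁻¹ := by
  rw [rpow_neg hρ, ← Nat.cast_add_one, rpow_natCast]

lemma neg_natCast_add_one_lt_neg_one {d : ℕ} (hd : d ≠ 0) : -(d + 1 : ℝ) < -1 := by
  have : (0 : ℝ) < d := by positivity
  linarith

lemma integrableOn_Ioi_inv_pow_succ {d : ℕ} (hd : d ≠ 0) {x : ℝ} (hx : 0 < x) :
    IntegrableOn (fun ρ : ℝ ↦ (ρ ^ (d + 1))⁻¹) (Ioi x) :=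
  (integrableOn_Ioi_rpow_of_lt (neg_natCast_add_one_lt_neg_one hd) hx).congr_fun
    (fun _ hρ ↦ rpow_neg_natCast_succ_eq_inv_pow (hx.trans hρ).le d) measurableSet_Ioi

lemma integral_Ioi_inv_pow_succ {d : ℕ} (hd : d ≠ 0) {x : ℝ} (hx : 0 < x) :
    ∫ ρ in Ioi x, (ρ ^ (d + 1))⁻¹ = (d * x ^ d)⁻¹ := by
  rw [← setIntegral_congr_fun measurableSet_Ioi
    (fun ρ hρ ↦ rpow_neg_natCast_succ_eq_inv_pow (hx.trans hρ).le d),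
    integral_Ioi_rpow_of_lt (neg_natCast_add_one_lt_neg_one hd) hx,
    show -(d + 1 : ℝ) + 1 = -d by ring, rpow_neg hx.le, rpow_natCast]
  field_simp

section TailIntegral

variable {Ω : Type*} [MeasurableSpace Ω] {μ : Measure Ω} {X : Ω → ℝ} {r : ℝ}

lemma setLIntegral_lintegral_Ioi_le [SFinite μ] (hX : Measurable X) {k : ℝ → ℝ≥0∞}
    (hk : Measurable k) :
    ∫⁻ ω in {ω | r ≤ X ω}, (∫⁻ ρ in Ioi (X ω), k ρ) ∂μ ≤
      ∫⁻ ρ in Ioi r, k ρ * μ {ω | X ω ≤ ρ} := by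
  have hS : MeasurableSet {ω | r ≤ X ω} := measurableSet_le measurable_const hX
  have h_tail : ∀ ω ∈ {ω | r ≤ X ω},
      ∫⁻ ρ in Ioi (X ω), k ρ = ∫⁻ ρ in Ioi r, (Ioi (X ω)).indicator k ρ := by
    intro ω hω
    rw [lintegral_indicator measurableSet_Ioi, Measure.restrict_restrict measurableSet_Ioi,
      Ioi_inter_Ioi, sup_eq_left.mpr hω]
  have h_joint : Measurable (Function.uncurry fun ω ρ ↦ (Ioi (X ω)).indicator k ρ) :=
    (hk.comp measurable_snd).indicator (measurableSet_lt (hX.comp measurable_fst) measurable_snd)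
  rw [setLIntegral_congr_fun hS h_tail, lintegral_lintegral_swap h_joint.aemeasurable]
  refine lintegral_mono fun ρ ↦ ?_
  calc ∫⁻ ω in {ω | r ≤ X ω}, (Ioi (X ω)).indicator k ρ ∂μ
      ≤ ∫⁻ ω, {ω | X ω < ρ}.indicator (fun _ ↦ k ρ) ω ∂μ := setLIntegral_le_lintegral _ _
    _ = k ρ * μ {ω | X ω < ρ} := lintegral_indicator_const (measurableSet_lt hX measurable_const) _
    _ ≤ k ρ * μ {ω | X ω ≤ ρ} := by gcongr; exact le_of_lt

lemma setIntegral_comp_le_integral_mul_measureReal_le [IsFiniteMeasure μ] (hX : Measurable X)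
    {f φ : ℝ → ℝ} (hf : Measurable f) (hf_nonneg : ∀ ρ ∈ Ioi r, 0 ≤ f ρ)
    (hf_int : IntegrableOn f (Ioi r)) (hφ : Measurable φ)
    (hφ_tail : ∀ x, r ≤ x → φ x = ∫ ρ in Ioi x, f ρ) :
    ∫ ω in {ω | r ≤ X ω}, φ (X ω) ∂μ ≤ ∫ ρ in Ioi r, f ρ * μ.real {ω | X ω ≤ ρ} := by
  have hS : MeasurableSet {ω | r ≤ X ω} := measurableSet_le measurable_const hX
  have hf_nonneg_ae {x : ℝ} (hx : r ≤ x) : ∀ᵐ ρ ∂volume.restrict (Ioi x), 0 ≤ f ρ :=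
    ae_restrict_of_forall_mem measurableSet_Ioi fun ρ hρ ↦ hf_nonneg ρ (hx.trans_lt hρ)
  have h_ofReal : ∀ ω ∈ {ω | r ≤ X ω},
      ENNReal.ofReal (φ (X ω)) = ∫⁻ ρ in Ioi (X ω), ENNReal.ofReal (f ρ) := fun ω hω ↦ by
    rw [hφ_tail _ hω, ofReal_integral_eq_lintegral_ofReal
      (hf_int.mono_set (Ioi_subset_Ioi hω)) (hf_nonneg_ae hω)]
  have hφ_nonneg : ∀ ω ∈ {ω | r ≤ X ω}, 0 ≤ φ (X ω) := fun ω hω ↦ by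
    rw [hφ_tail _ hω]; exact integral_nonneg_of_ae (hf_nonneg_ae hω)
  have hF : Measurable fun ρ ↦ μ.real {ω | X ω ≤ ρ} :=
    Monotone.measurable fun a b hab ↦ measureReal_mono fun ω hω ↦ le_trans hω hab
  have h_rhs : ∀ ρ ∈ Ioi r, ENNReal.ofReal (f ρ * μ.real {ω | X ω ≤ ρ}) =
      ENNReal.ofReal (f ρ) * μ {ω | X ω ≤ ρ} := fun ρ hρ ↦ by
    rw [ENNReal.ofReal_mul (hf_nonneg ρ hρ), ofReal_measureReal]
  have h_fin : ∫⁻ ρ in Ioi r, ENNReal.ofReal (f ρ) * μ {ω | X ω ≤ ρ} ≠ ⊤ := by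
    refine ne_top_of_le_ne_top ?_ (lintegral_mono fun ρ ↦ mul_le_mul_right
      (measure_mono (subset_univ {ω | X ω ≤ ρ})) (ENNReal.ofReal (f ρ)))
    rw [lintegral_mul_const _ hf.ennreal_ofReal]
    exact ENNReal.mul_ne_top hf_int.lintegral_lt_top.ne (measure_ne_top _ _)
  calc ∫ ω in {ω | r ≤ X ω}, φ (X ω) ∂μ
      = (∫⁻ ω in {ω | r ≤ X ω}, ENNReal.ofReal (φ (X ω)) ∂μ).toReal :=
        integral_eq_lintegral_of_nonneg_ae (ae_restrict_of_forall_mem hS hφ_nonneg)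
          (hφ.comp hX).aestronglyMeasurable
    _ = (∫⁻ ω in {ω | r ≤ X ω}, (∫⁻ ρ in Ioi (X ω), ENNReal.ofReal (f ρ)) ∂μ).toReal := by
        rw [setLIntegral_congr_fun hS h_ofReal]
    _ ≤ (∫⁻ ρ in Ioi r, ENNReal.ofReal (f ρ) * μ {ω | X ω ≤ ρ}).toReal :=
        ENNReal.toReal_mono h_fin (setLIntegral_lintegral_Ioi_le hX hf.ennreal_ofReal)
    _ = ∫ ρ in Ioi r, f ρ * μ.real {ω | X ω ≤ ρ} := by
        rw [← setLIntegral_congr_fun measurableSet_Ioi h_rhs, integral_eq_lintegral_of_nonneg_ae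
          (ae_restrict_of_forall_mem measurableSet_Ioi fun ρ hρ ↦
            mul_nonneg (hf_nonneg ρ hρ) measureReal_nonneg)
          (hf.mul hF).aestronglyMeasurable]

end TailIntegral

/-- For a random vector `Z` in `ℝ^d` and `r > 0`,
`E[(r^d/‖Z‖^d) 𝟙_{‖Z‖ ≥ r}] ≤ d ∫_r^∞ (r^d/ρ^{d+1}) P(‖Z‖ ≤ ρ) dρ`. -/
theorem expectation_tail_le_integral (d : ℕ) (hd : 1 ≤ d) {Ω : Type*} [MeasurableSpace Ω]
    (ℙ : Measure Ω) [IsProbabilityMeasure ℙ]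
    (Z : Ω → EuclideanSpace ℝ (Fin d)) (hZ : Measurable Z) (r : ℝ) (hr : 0 < r) :
    ∫ ω in {ω | r ≤ ‖Z ω‖}, r ^ d / ‖Z ω‖ ^ d ∂ℙ ≤
      d * ∫ ρ in Ioi r, r ^ d / ρ ^ (d + 1) * (ℙ {ω | ‖Z ω‖ ≤ ρ}).toReal := by
  have hd₀ : d ≠ 0 := Nat.one_le_iff_ne_zero.mp hd
  have h_tail (x : ℝ) (hx : r ≤ x) :
      r ^ d / x ^ d = ∫ ρ in Ioi x, d * r ^ d * (ρ ^ (d + 1))⁻¹ := by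
    have : x ≠ 0 := (hr.trans_le hx).ne'
    rw [integral_const_mul, integral_Ioi_inv_pow_succ hd₀ (hr.trans_le hx)]
    field_simp
  calc ∫ ω in {ω | r ≤ ‖Z ω‖}, r ^ d / ‖Z ω‖ ^ d ∂ℙ
      ≤ ∫ ρ in Ioi r, d * r ^ d * (ρ ^ (d + 1))⁻¹ * ℙ.real {ω | ‖Z ω‖ ≤ ρ} :=
        setIntegral_comp_le_integral_mul_measureReal_le hZ.norm (by fun_prop)
          (fun ρ hρ ↦ by have := hr.trans hρ; positivity)
          ((integrableOn_Ioi_inv_pow_succ hd₀ hr).const_mul _) (by fun_prop) h_tail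
    _ = d * ∫ ρ in Ioi r, r ^ d / ρ ^ (d + 1) * (ℙ {ω | ‖Z ω‖ ≤ ρ}).toReal := by
        rw [← integral_const_mul]
        congr with ρ
        rw [measureReal_def]
        ring
end

section
/- Let Z be a random vector in ℝ^d such that P(‖Z‖ ≤ ρ) ≤ K min(1, ρ^d / a^d) for all ρ > 0, where K, a > 0 are constants. Then for every ε ∈ (0,1) there is a constant K' (depending only on K, d, ε) such that for all r > 0, E[min(1, r^d ‖Z‖^{-d})] ≤ K' min(1, r^{d-ε} / a^{d-ε}). -/
/-!
Layer cake: for `f = min(1, r^d ‖Z‖^{-d})` one has `f ≥ t` iff `‖Z‖ ≤ r t^{-1/d}`, so the small-ball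
hypothesis gives `P(f ≥ t) ≤ K min(1, s/t) ≤ K (s/t)^θ` with `s = (r/a)^d` and `θ = (d - ε)/d < 1`.
Since `t^{-θ}` is integrable on `(0, 1]`, `E f ≤ K s^θ / (1 - θ) = (K d / ε) (r/a)^{d-ε}`, while
trivially `E f ≤ 1`.
-/

open MeasureTheory Real Set

lemma min_one_le_rpow {x θ : ℝ} (hx : 0 ≤ x) (hθ0 : 0 ≤ θ) (hθ1 : θ ≤ 1) :
    min 1 x ≤ x ^ θ := by
  rcases le_total 1 x with h | h
  · exact (min_le_left 1 x).trans (one_le_rpow h hθ0)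
  · calc min 1 x ≤ x ^ (1 : ℝ) := by rw [rpow_one]; exact min_le_right 1 x
      _ ≤ x ^ θ := rpow_le_rpow_of_exponent_ge' hx h hθ0 hθ1

lemma min_one_mul_le_max_one_mul_min_one {b c : ℝ} (hc : 0 ≤ c) :
    min 1 (b * c) ≤ max 1 b * min 1 c := by
  rcases le_total 1 c with h | h
  · rw [min_eq_left h, mul_one]
    exact (min_le_left _ _).trans (le_max_left _ _)
  · rw [min_eq_right h]
    exact (min_le_right _ _).trans (mul_le_mul_of_nonneg_right (le_max_right _ _) hc)

lemma integral_Ioc_zero_one_rpow_neg {θ : ℝ} (hθ : θ < 1) :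
    ∫ t in Ioc (0 : ℝ) 1, t ^ (-θ) = 1 / (1 - θ) := by
  rw [← intervalIntegral.integral_of_le zero_le_one, integral_rpow (Or.inl (by linarith)),
    one_rpow, zero_rpow (by linarith), sub_zero, neg_add_eq_sub]

/-- The value at `x = 0` is `1`, not the `min 1 0` that Lean's `r ^ d / 0 = 0` would give. -/
noncomputable def minOneDivPow (d : ℕ) (r x : ℝ) : ℝ :=
  if x = 0 then 1 else min 1 (r ^ d / x ^ d)

lemma minOneDivPow_nonneg (d : ℕ) {r x : ℝ} (hr : 0 ≤ r) (hx : 0 ≤ x) :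
    0 ≤ minOneDivPow d r x := by
  unfold minOneDivPow; split_ifs <;> positivity

lemma minOneDivPow_le_one (d : ℕ) (r x : ℝ) : minOneDivPow d r x ≤ 1 := by
  unfold minOneDivPow; split_ifs <;> simp

lemma le_rpow_inv_of_le_minOneDivPow {d : ℕ} (hd : d ≠ 0) {r x t : ℝ} (hr : 0 ≤ r)
    (hx : 0 ≤ x) (ht : 0 < t) (h : t ≤ minOneDivPow d r x) :
    x ≤ (r ^ d / t) ^ ((d : ℝ)⁻¹) := by
  unfold minOneDivPow at h
  by_cases hx0 : x = 0
  · rw [hx0]; positivity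
  rw [if_neg hx0] at h
  have hxd : 0 < x ^ d := pow_pos (lt_of_le_of_ne hx (Ne.symm hx0)) d
  have hpow : x ^ d ≤ r ^ d / t := by
    rw [le_div_iff₀ ht, mul_comm, ← le_div_iff₀ hxd]
    exact h.trans (min_le_right _ _)
  rwa [← pow_le_pow_iff_left₀ hx (by positivity) hd, rpow_inv_natCast_pow (by positivity) hd]

section Tail

variable {Ω : Type*} [MeasurableSpace Ω] {μ : Measure Ω}

theorem integral_le_div_of_measureReal_le_rpow_neg {f : Ω → ℝ} (hf : Integrable f μ)
    (hf0 : 0 ≤ᵐ[μ] f) (hf1 : f ≤ᵐ[μ] 1) {C θ : ℝ} (hθ : θ < 1)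
    (htail : ∀ t ∈ Ioc (0 : ℝ) 1, μ.real {ω | t ≤ f ω} ≤ C * t ^ (-θ)) :
    ∫ ω, f ω ∂μ ≤ C / (1 - θ) := by
  have hint : IntegrableOn (fun t : ℝ => t ^ (-θ)) (Ioc 0 1) := by
    have h := intervalIntegral.intervalIntegrable_rpow' (a := 0) (b := 1)
      (show -1 < -θ by linarith)
    rwa [intervalIntegrable_iff_integrableOn_Ioc_of_le zero_le_one] at h
  calc ∫ ω, f ω ∂μ = ∫ t in Ioc 0 1, μ.real {ω | t ≤ f ω} :=
        hf.integral_eq_integral_Ioc_meas_le hf0 hf1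
    _ ≤ ∫ t in Ioc 0 1, C * t ^ (-θ) :=
        integral_mono_of_nonneg (ae_of_all _ fun _ => measureReal_nonneg) (hint.const_mul C)
          (ae_restrict_of_forall_mem measurableSet_Ioc htail)
    _ = C / (1 - θ) := by rw [integral_const_mul, integral_Ioc_zero_one_rpow_neg hθ, mul_one_div]

variable {R : Ω → ℝ} {d : ℕ} {K a r : ℝ}

theorem measureReal_le_minOneDivPow_le [IsFiniteMeasure μ] (hR : 0 ≤ R) (hd : d ≠ 0)
    (hr : 0 < r) {t : ℝ} (ht : 0 < t)
    (hsmall : ∀ ρ : ℝ, 0 < ρ → μ.real {ω | R ω ≤ ρ} ≤ K * min 1 (ρ ^ d / a ^ d)) :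
    μ.real {ω | t ≤ minOneDivPow d r (R ω)} ≤ K * min 1 (r ^ d / a ^ d / t) :=
  calc _ ≤ μ.real {ω | R ω ≤ (r ^ d / t) ^ ((d : ℝ)⁻¹)} :=
        measureReal_mono fun ω hω => le_rpow_inv_of_le_minOneDivPow hd hr.le (hR ω) ht hω
    _ ≤ K * min 1 (((r ^ d / t) ^ ((d : ℝ)⁻¹)) ^ d / a ^ d) := hsmall _ (by positivity)
    _ = K * min 1 (r ^ d / a ^ d / t) := by
        rw [rpow_inv_natCast_pow (by positivity) hd, div_right_comm]

theorem integral_minOneDivPow_le [IsProbabilityMeasure μ] (hRm : Measurable R) (hR : 0 ≤ R)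
    (hd : d ≠ 0) (ha : 0 < a) (hr : 0 < r) {θ : ℝ} (hθ0 : 0 ≤ θ) (hθ1 : θ < 1)
    (hsmall : ∀ ρ : ℝ, 0 < ρ → μ.real {ω | R ω ≤ ρ} ≤ K * min 1 (ρ ^ d / a ^ d)) :
    ∫ ω, minOneDivPow d r (R ω) ∂μ ≤ min 1 (K * (r ^ d / a ^ d) ^ θ / (1 - θ)) := by
  set s := r ^ d / a ^ d
  have hK : 0 ≤ K := by
    simpa [div_self (pow_ne_zero d ha.ne')] using measureReal_nonneg.trans (hsmall a ha)
  have hf1 : ∀ ω, minOneDivPow d r (R ω) ≤ 1 := fun ω => minOneDivPow_le_one d r (R ω)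
  have hf : Integrable (fun ω => minOneDivPow d r (R ω)) μ := by
    refine .of_bound (Measurable.aestronglyMeasurable ?_) 1 (ae_of_all _ fun ω => ?_)
    · exact Measurable.ite (hRm (measurableSet_singleton 0)) measurable_const (by fun_prop)
    · rw [norm_of_nonneg (minOneDivPow_nonneg d hr.le (hR ω))]; exact hf1 ω
  have htail : ∀ t ∈ Ioc (0 : ℝ) 1,
      μ.real {ω | t ≤ minOneDivPow d r (R ω)} ≤ K * s ^ θ * t ^ (-θ) := by
    intro t ⟨ht, _⟩
    calc _ ≤ K * min 1 (s / t) := measureReal_le_minOneDivPow_le hR hd hr ht hsmall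
      _ ≤ K * (s / t) ^ θ := by gcongr; exact min_one_le_rpow (by positivity) hθ0 hθ1.le
      _ = K * s ^ θ * t ^ (-θ) := by
          rw [div_rpow (by positivity) ht.le, rpow_neg ht.le, mul_assoc, div_eq_mul_inv]
  exact le_min ((integral_mono hf (integrable_const 1) hf1).trans (by simp))
    (integral_le_div_of_measureReal_le_rpow_neg hf
      (ae_of_all _ fun ω => minOneDivPow_nonneg d hr.le (hR ω)) (ae_of_all _ hf1) hθ1 htail)

end Tail

theorem expectation_min_bound_general (d : ℕ) (hd : 1 ≤ d) (K : ℝ)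
    (ε : ℝ) (hε : ε ∈ Set.Ioo (0 : ℝ) 1) :
    ∃ K' : ℝ, 0 < K' ∧
      ∀ (Ω : Type) (_ : MeasurableSpace Ω) (ℙ : Measure Ω), IsProbabilityMeasure ℙ →
        ∀ (Z : Ω → EuclideanSpace ℝ (Fin d)), Measurable Z →
          ∀ a : ℝ, 0 < a →
            (∀ ρ : ℝ, 0 < ρ → (ℙ {ω | ‖Z ω‖ ≤ ρ}).toReal ≤ K * min 1 (ρ ^ d / a ^ d)) →
            ∀ r : ℝ, 0 < r →
              (∫ ω, (if ‖Z ω‖ = 0 then 1 else min 1 (r ^ d / ‖Z ω‖ ^ d)) ∂ℙ) ≤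
                K' * min 1 (r ^ ((d : ℝ) - ε) / a ^ ((d : ℝ) - ε)) := by
  obtain ⟨hε0, hε1⟩ := hε
  have hd1 : (1 : ℝ) ≤ d := by exact_mod_cast hd
  have hd0 : (0 : ℝ) < d := by linarith
  set θ : ℝ := (d - ε) / d
  have hθ0 : 0 ≤ θ := div_nonneg (by linarith) hd0.le
  have hθ1 : θ < 1 := by rw [div_lt_one hd0]; linarith
  have hdθ : (d : ℝ) * θ = d - ε := mul_div_cancel₀ _ hd0.ne'
  have h1θ : 1 - θ = ε / d := by rw [eq_div_iff hd0.ne', sub_mul, one_mul, mul_comm θ, hdθ]; ring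
  refine ⟨max 1 (K * (d / ε)), lt_max_of_lt_left one_pos, ?_⟩
  intro Ω _ ℙ _ Z hZ a ha hsmall r hr
  have hsθ : (r ^ d / a ^ d) ^ θ = r ^ ((d : ℝ) - ε) / a ^ ((d : ℝ) - ε) := by
    rw [← div_pow, ← rpow_natCast, ← rpow_mul (by positivity), hdθ, div_rpow hr.le ha.le]
  calc ∫ ω, minOneDivPow d r ‖Z ω‖ ∂ℙ ≤ min 1 (K * (r ^ d / a ^ d) ^ θ / (1 - θ)) :=
        integral_minOneDivPow_le hZ.norm (fun ω => norm_nonneg (Z ω)) (by omega) ha hr hθ0 hθ1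
          hsmall
    _ = min 1 (K * (d / ε) * (r ^ ((d : ℝ) - ε) / a ^ ((d : ℝ) - ε))) := by
        rw [hsθ, h1θ, div_div_eq_mul_div]; ring_nf
    _ ≤ _ := min_one_mul_le_max_one_mul_min_one (by positivity)

/-- If `P(‖Z‖ ≤ ρ) ≤ K min(1, ρ^d/a^d)` for all `ρ > 0`, then for every `ε ∈ (0,1)`
there is `K'` (depending only on `K`, `d`, `ε`) with
`E[min(1, r^d ‖Z‖^{-d})] ≤ K' min(1, r^{d-ε}/a^{d-ε})` for all `r > 0`. -/
theorem expectation_min_bound (d : ℕ) (hd : 1 ≤ d) (K : ℝ) (hK : 0 < K)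
    (ε : ℝ) (hε : ε ∈ Set.Ioo (0 : ℝ) 1) :
    ∃ K' : ℝ, 0 < K' ∧
      ∀ (Ω : Type) (_ : MeasurableSpace Ω) (ℙ : Measure Ω), IsProbabilityMeasure ℙ →
        ∀ (Z : Ω → EuclideanSpace ℝ (Fin d)), Measurable Z →
          ∀ a : ℝ, 0 < a →
            (∀ ρ : ℝ, 0 < ρ → (ℙ {ω | ‖Z ω‖ ≤ ρ}).toReal ≤ K * min 1 (ρ ^ d / a ^ d)) →
            ∀ r : ℝ, 0 < r →
              (∫ ω, (if ‖Z ω‖ = 0 then 1 else min 1 (r ^ d / ‖Z ω‖ ^ d)) ∂ℙ) ≤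
                K' * min 1 (r ^ ((d : ℝ) - ε) / a ^ ((d : ℝ) - ε)) :=
  expectation_min_bound_general d hd K ε hε
end
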